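/- arXiv:2308.00130 — 5 statements merged into one kernel-verified Lean document; each statement's English description precedes it below -/
import Mathlib

section
/- Let ε : [0, ∞) → ℝ be differentiable, let g : [0, ∞) → ℝ be positive, and let a > 0 and F̄ ≥ 0 be constants such that ε(t)·ε'(t) ≤ g(t)·|ε(t)|·(F̄ − a·|ε(t)|) for all t ≥ 0. Then |ε(t)| ≤ max{|ε(0)|, F̄/a} for all t ≥ 0. -/
/-- Ultimate-boundedness comparison lemma: if `ε` is differentiable on `[0,∞)` with
derivative `ε'` and `ε·ε' ≤ g·|ε|·(Fbar − a·|ε|)` for a positive factor `g` and constants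
`a > 0`, `Fbar ≥ 0`, then `|ε(t)| ≤ max{|ε(0)|, Fbar/a}` for all `t ≥ 0`. -/
theorem stmt_5 (ε ε' g : ℝ → ℝ) (a Fbar : ℝ) (ha : 0 < a) (hF : 0 ≤ Fbar)
    (hg : ∀ t : ℝ, 0 ≤ t → 0 < g t)
    (hder : ∀ t : ℝ, 0 ≤ t → HasDerivWithinAt ε (ε' t) (Set.Ici 0) t)
    (hineq : ∀ t : ℝ, 0 ≤ t → ε t * ε' t ≤ g t * |ε t| * (Fbar - a * |ε t|)) :
    ∀ t : ℝ, 0 ≤ t → |ε t| ≤ max |ε 0| (Fbar / a) := by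
  set M : ℝ := max |ε 0| (Fbar / a) with hM
  have hM0 : 0 ≤ M := le_trans (abs_nonneg _) (le_max_left _ _)
  have hMF : Fbar / a ≤ M := le_max_right _ _
  set h : ℝ → ℝ := fun t => ε t ^ 2 with hh
  have hc : ContinuousOn h (Set.Ici 0) := fun t ht =>
    ((hder t ht).continuousWithinAt).pow 2
  intro T hT
  by_contra hcon
  push_neg at hcon
  have hhT : M ^ 2 < h T := by
    have h1 := abs_nonneg (ε T)
    have h2 : h T = |ε T| ^ 2 := (sq_abs _).symm
    rw [h2]
    nlinarith
  set S : Set ℝ := {t | t ∈ Set.Icc (0:ℝ) T ∧ h t ≤ M ^ 2} with hS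
  have hScomp : IsCompact S := by
    have hSeq : S = Set.Icc 0 T ∩ h ⁻¹' Set.Iic (M ^ 2) := by
      ext x; simp [hS, Set.mem_Icc, and_assoc]
    have hclosed : IsClosed S := by
      rw [hSeq]
      exact (hc.mono (fun x (hx : x ∈ Set.Icc (0:ℝ) T) => hx.1)).preimage_isClosed_of_isClosed
        isClosed_Icc isClosed_Iic
    exact isCompact_Icc.of_isClosed_subset hclosed (fun x hx => hx.1)
  have h0S : (0:ℝ) ∈ S := by
    constructor
    · exact ⟨le_refl _, hT⟩
    · have h1 : |ε 0| ≤ M := le_max_left _ _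
      have h2 : h 0 = |ε 0| ^ 2 := (sq_abs _).symm
      rw [h2]
      nlinarith [abs_nonneg (ε 0)]
  have hSne : S.Nonempty := ⟨0, h0S⟩
  set s : ℝ := sSup S with hs
  have hsS : s ∈ S := hScomp.sSup_mem hSne
  have hs0 : 0 ≤ s := hsS.1.1
  have hsT : s ≤ T := hsS.1.2
  have hsltT : s < T := by
    rcases lt_or_eq_of_le hsT with hlt | heq
    · exact hlt
    · exfalso
      have h2 := hsS.2
      rw [heq] at h2
      exact absurd h2 (not_le.mpr hhT)
  -- for t ∈ (s, T], h t > M^2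
  have hbig : ∀ t, s < t → t ≤ T → M ^ 2 < h t := by
    intro t hst htT
    rcases lt_or_ge (M ^ 2) (h t) with hlt | hle
    · exact hlt
    · have htS : t ∈ S := ⟨⟨le_trans hs0 hst.le, htT⟩, hle⟩
      exact absurd (le_csSup hScomp.bddAbove htS) (not_le.mpr hst)
  -- h is antitone on [s, T]
  have hanti : AntitoneOn h (Set.Icc s T) := by
    apply antitoneOn_of_deriv_nonpos (convex_Icc s T)
      (hc.mono (fun x hx => le_trans hs0 hx.1))
    · rw [interior_Icc]
      intro x hx
      have hx0 : 0 < x := lt_of_le_of_lt hs0 hx.1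
      exact (((hder x hx0.le).hasDerivAt (Ici_mem_nhds hx0)).pow 2).differentiableAt
        |>.differentiableWithinAt
    · rw [interior_Icc]
      intro x hx
      have hx0 : 0 < x := lt_of_le_of_lt hs0 hx.1
      have hd : HasDerivAt h (2 * ε x ^ 1 * ε' x) x :=
        ((hder x hx0.le).hasDerivAt (Ici_mem_nhds hx0)).pow 2
      rw [hd.deriv]
      have hgt : M ^ 2 < h x := hbig x hx.1 hx.2.le
      have hx2 : h x = |ε x| ^ 2 := (sq_abs _).symm
      rw [hx2] at hgt
      have habs : M < |ε x| := by
        nlinarith [abs_nonneg (ε x)]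
      have hneg : Fbar - a * |ε x| < 0 := by
        have : Fbar / a ≤ M := hMF
        have : Fbar ≤ a * M := by
          rw [div_le_iff₀ ha] at this; linarith [this]
        nlinarith
      have := hineq x hx0.le
      have hgx := hg x hx0.le
      nlinarith [abs_nonneg (ε x), mul_pos hgx (lt_of_le_of_lt hM0 habs)]
  have : h T ≤ h s := hanti ⟨le_refl s, hsT⟩ ⟨hsT, le_refl T⟩ hsT
  have := hsS.2
  linarith [hhT]
end

section
/- Let p, p_des : ℝ → ℝ² and ψ, u, v : ℝ → ℝ be such that at time t: p is differentiable with ṗ_x(t) = u(t)·cos ψ(t) − v(t)·sin ψ(t) and ṗ_y(t) = u(t)·sin ψ(t) + v(t)·cos ψ(t); p_des is differentiable at t; the error e(t) = p_des(t) − p(t) is nonzero with e_d(t) = ‖e(t)‖; and ψ_e(t) ∈ ℝ satisfies e_x(t) = e_d(t)·cos(ψ(t) − ψ_e(t)) and e_y(t) = e_d(t)·sin(ψ(t) − ψ_e(t)). Then the distance error t ↦ ‖p_des(t) − p(t)‖ is differentiable at t with derivative ė_d(t) = −u(t)·cos ψ_e(t) + v(t)·sin ψ_e(t) + ṗ_{x,des}(t)·cos(ψ(t)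 − ψ_e(t)) + ṗ_{y,des}(t)·sin(ψ(t) − ψ_e(t)). -/
open Real

/-!
Since `e_d = √(e_x² + e_y²)`, its derivative is `⟨e, ė⟩ / e_d`, i.e. the component of `ė` along
`e / e_d = (cos (ψ - ψₑ), sin (ψ - ψₑ))`. The part `-ṗ` of `ė` is the body velocity `(u, v)`
rotated by `ψ`, so its component along the direction `ψ - ψₑ` is that of `(u, v)` along `-ψₑ`,
namely `u cos ψₑ - v sin ψₑ`.
-/

theorem hasDerivAt_sqrt_sq_add_sq {f g : ℝ → ℝ} {f' g' t : ℝ}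
    (hf : HasDerivAt f f' t) (hg : HasDerivAt g g' t) (hne : ¬(f t = 0 ∧ g t = 0)) :
    HasDerivAt (fun s => √(f s ^ 2 + g s ^ 2))
      ((f t * f' + g t * g') / √(f t ^ 2 + g t ^ 2)) t := by
  have hpos : 0 < f t ^ 2 + g t ^ 2 := by
    by_contra! h
    exact hne ⟨by nlinarith [sq_nonneg (f t), sq_nonneg (g t)],
      by nlinarith [sq_nonneg (f t), sq_nonneg (g t)]⟩
  refine (((hf.pow 2).add (hg.pow 2)).sqrt hpos.ne').congr_deriv ?_
  simp only [Pi.add_apply, Pi.pow_apply]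
  field_simp
  ring

theorem hasDerivAt_sqrt_sq_add_sq_of_polar {f g : ℝ → ℝ} {f' g' t θ : ℝ}
    (hf : HasDerivAt f f' t) (hg : HasDerivAt g g' t) (hne : ¬(f t = 0 ∧ g t = 0))
    (hx : f t = √(f t ^ 2 + g t ^ 2) * cos θ) (hy : g t = √(f t ^ 2 + g t ^ 2) * sin θ) :
    HasDerivAt (fun s => √(f s ^ 2 + g s ^ 2)) (f' * cos θ + g' * sin θ) t := by
  have hr : √(f t ^ 2 + g t ^ 2) ≠ 0 := fun h =>
    hne ⟨by rw [hx, h, zero_mul], by rw [hy, h, zero_mul]⟩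
  convert hasDerivAt_sqrt_sq_add_sq hf hg hne using 1
  rw [eq_div_iff hr]
  linear_combination (-f') * hx - g' * hy

theorem rotated_velocity_projection (u v ψ ψₑ : ℝ) :
    (u * cos ψ - v * sin ψ) * cos (ψ - ψₑ) + (u * sin ψ + v * cos ψ) * sin (ψ - ψₑ)
      = u * cos ψₑ - v * sin ψₑ := by
  rw [cos_sub, sin_sub]
  linear_combination (u * cos ψₑ - v * sin ψₑ) * sin_sq_add_cos_sq ψ

/-- Derivative of the distance error `e_d = √((p_{x,des}−p_x)² + (p_{y,des}−p_y)²)` under the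
USV kinematics `ṗ_x = u cos ψ − v sin ψ`, `ṗ_y = u sin ψ + v cos ψ`, where the angle `ψ_e`
satisfies `e_x = e_d·cos(ψ−ψ_e)`, `e_y = e_d·sin(ψ−ψ_e)`:
`ė_d = −u cos ψ_e + v sin ψ_e + ṗ_{x,des} cos(ψ−ψ_e) + ṗ_{y,des} sin(ψ−ψ_e)`. -/
theorem stmt_8 (px py pdx pdy ψ u v : ℝ → ℝ) (pdx' pdy' ψe t : ℝ)
    (hpx : HasDerivAt px (u t * Real.cos (ψ t) - v t * Real.sin (ψ t)) t)
    (hpy : HasDerivAt py (u t * Real.sin (ψ t) + v t * Real.cos (ψ t)) t)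
    (hpdx : HasDerivAt pdx pdx' t) (hpdy : HasDerivAt pdy pdy' t)
    (hne : ¬(pdx t - px t = 0 ∧ pdy t - py t = 0))
    (hx : pdx t - px t
      = Real.sqrt ((pdx t - px t) ^ 2 + (pdy t - py t) ^ 2) * Real.cos (ψ t - ψe))
    (hy : pdy t - py t
      = Real.sqrt ((pdx t - px t) ^ 2 + (pdy t - py t) ^ 2) * Real.sin (ψ t - ψe)) :
    HasDerivAt (fun s => Real.sqrt ((pdx s - px s) ^ 2 + (pdy s - py s) ^ 2))
      (-(u t) * Real.cos ψe + v t * Real.sin ψe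
        + pdx' * Real.cos (ψ t - ψe) + pdy' * Real.sin (ψ t - ψe)) t := by
  refine (hasDerivAt_sqrt_sq_add_sq_of_polar (hpdx.sub hpx) (hpdy.sub hpy) hne hx hy).congr_deriv
    ?_
  linear_combination -rotated_velocity_projection (u t) (v t) (ψ t) ψe
end

section
/- Under the kinematics ṗ_x(t) = u(t)·cos ψ(t) − v(t)·sin ψ(t), ṗ_y(t) = u(t)·sin ψ(t) + v(t)·cos ψ(t), ψ̇(t) = r(t), with p_des differentiable at t, error e(t) = p_des(t) − p(t) nonzero, e_d(t) = ‖e(t)‖, and ψ_e(t) ∈ ℝ differentiable with e_x = e_d·cos(ψ − ψ_e) and e_y = e_d·sin(ψ − ψ_e), the orientation error e_o(t) = (e_x(t)/e_d(t))·sin ψ(t) − (e_y(t)/e_d(t))·cos ψ(t) is differentiable at t with derivative ė_o = r·cos ψ_e + (u/e_d)·sin ψ_e·cos ψ_e + (v/e_d)·cos² ψ_e − (ṗ_{x,des}/e_d)·(sin ψ_e·cos(ψ − ψ_e) − sin ψ) − (ṗ_{y,des}/e_d)·(sin ψ_e·sin(ψ − ψ_e) + cos ψ). -/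
/-!
The unit error vector `n = e / e_d` turns at the rate `ω = (e_x ė_y - e_y ė_x) / e_d²`, i.e.
`ṅ = ω n⊥`. As `e_o` is the cross product of `n` with the heading `(cos ψ, sin ψ)`, this gives
`ė_o = (r - ω) ⟪n, (cos ψ, sin ψ)⟫ = (r - ω) cos ψ_e`; substituting `n = (cos (ψ - ψ_e), sin (ψ - ψ_e))`
into `ω` yields the formula. In particular no derivative of `ψ_e` enters.
-/

open Real

lemma sq_add_sq_pos_of_not_and {a b : ℝ} (h : ¬(a = 0 ∧ b = 0)) : 0 < a ^ 2 + b ^ 2 :=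
  (add_nonneg (sq_nonneg a) (sq_nonneg b)).lt_of_ne' <| by
    simpa only [pow_two, ne_eq, mul_self_add_mul_self_eq_zero] using h

lemma hasDerivAt_div_sqrt_sq_add_sq {f g : ℝ → ℝ} {f' g' t : ℝ}
    (hf : HasDerivAt f f' t) (hg : HasDerivAt g g' t) (hfg : ¬(f t = 0 ∧ g t = 0)) :
    HasDerivAt (fun s => f s / √(f s ^ 2 + g s ^ 2))
      (-(g t / √(f t ^ 2 + g t ^ 2)) * ((f t * g' - g t * f') / (f t ^ 2 + g t ^ 2))) t := by
  have hq := sq_add_sq_pos_of_not_and hfg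
  have hd : √(f t ^ 2 + g t ^ 2) ≠ 0 := (sqrt_pos.mpr hq).ne'
  have hd2 : √(f t ^ 2 + g t ^ 2) ^ 2 = f t ^ 2 + g t ^ 2 := sq_sqrt hq.le
  have hq' : HasDerivAt (fun s => f s ^ 2 + g s ^ 2) (2 * f t * f' + 2 * g t * g') t :=
    ((hf.fun_pow 2).add (hg.fun_pow 2)).congr_deriv (by ring)
  have hN := hq'.sqrt hq.ne'
  refine (hf.div hN hd).congr_deriv ?_
  field_simp
  rw [hd2]
  ring

lemma hasDerivAt_div_sqrt_sq_add_sq' {f g : ℝ → ℝ} {f' g' t : ℝ}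
    (hf : HasDerivAt f f' t) (hg : HasDerivAt g g' t) (hfg : ¬(f t = 0 ∧ g t = 0)) :
    HasDerivAt (fun s => g s / √(f s ^ 2 + g s ^ 2))
      (f t / √(f t ^ 2 + g t ^ 2) * ((f t * g' - g t * f') / (f t ^ 2 + g t ^ 2))) t := by
  have h := hasDerivAt_div_sqrt_sq_add_sq hg hf (by tauto)
  simp only [add_comm (g _ ^ 2)] at h
  exact h.congr_deriv (by ring)

lemma hasDerivAt_mul_sin_sub_mul_cos {x y ψ : ℝ → ℝ} {ω r t : ℝ}
    (hx : HasDerivAt x (-(y t) * ω) t) (hy : HasDerivAt y (x t * ω) t) (hψ : HasDerivAt ψ r t) :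
    HasDerivAt (fun s => x s * sin (ψ s) - y s * cos (ψ s))
      ((r - ω) * (x t * cos (ψ t) + y t * sin (ψ t))) t :=
  ((hx.mul hψ.sin).sub (hy.mul hψ.cos)).congr_deriv (by ring)

theorem stmt_9_general (px py pdx pdy ψ ψe u v r : ℝ → ℝ) (pdx' pdy' t : ℝ)
    (hpx : HasDerivAt px (u t * Real.cos (ψ t) - v t * Real.sin (ψ t)) t)
    (hpy : HasDerivAt py (u t * Real.sin (ψ t) + v t * Real.cos (ψ t)) t)
    (hψ : HasDerivAt ψ (r t) t)
    (hpdx : HasDerivAt pdx pdx' t) (hpdy : HasDerivAt pdy pdy' t)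
    (hne : ¬(pdx t - px t = 0 ∧ pdy t - py t = 0))
    (hx : ∀ s : ℝ, pdx s - px s
      = Real.sqrt ((pdx s - px s) ^ 2 + (pdy s - py s) ^ 2) * Real.cos (ψ s - ψe s))
    (hy : ∀ s : ℝ, pdy s - py s
      = Real.sqrt ((pdx s - px s) ^ 2 + (pdy s - py s) ^ 2) * Real.sin (ψ s - ψe s)) :
    HasDerivAt (fun s =>
        ((pdx s - px s) / Real.sqrt ((pdx s - px s) ^ 2 + (pdy s - py s) ^ 2))
            * Real.sin (ψ s)
          - ((pdy s - py s) / Real.sqrt ((pdx s - px s) ^ 2 + (pdy s - py s) ^ 2))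
            * Real.cos (ψ s))
      (r t * Real.cos (ψe t)
        + (u t / Real.sqrt ((pdx t - px t) ^ 2 + (pdy t - py t) ^ 2))
            * Real.sin (ψe t) * Real.cos (ψe t)
        + (v t / Real.sqrt ((pdx t - px t) ^ 2 + (pdy t - py t) ^ 2))
            * Real.cos (ψe t) ^ 2
        - (pdx' / Real.sqrt ((pdx t - px t) ^ 2 + (pdy t - py t) ^ 2))
            * (Real.sin (ψe t) * Real.cos (ψ t - ψe t) - Real.sin (ψ t))
        - (pdy' / Real.sqrt ((pdx t - px t) ^ 2 + (pdy t - py t) ^ 2))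
            * (Real.sin (ψe t) * Real.sin (ψ t - ψe t) + Real.cos (ψ t))) t := by
  have hex : HasDerivAt (fun s => pdx s - px s) _ t := hpdx.sub hpx
  have hey : HasDerivAt (fun s => pdy s - py s) _ t := hpdy.sub hpy
  refine (hasDerivAt_mul_sin_sub_mul_cos (hasDerivAt_div_sqrt_sq_add_sq hex hey hne)
    (hasDerivAt_div_sqrt_sq_add_sq' hex hey hne) hψ).congr_deriv ?_
  have hq := sq_add_sq_pos_of_not_and hne
  have hxt := hx t
  have hyt := hy t
  set d := √((pdx t - px t) ^ 2 + (pdy t - py t) ^ 2)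
  have hd : 0 < d := sqrt_pos.mpr hq
  have hd2 : (pdx t - px t) ^ 2 + (pdy t - py t) ^ 2 = d ^ 2 := (sq_sqrt hq.le).symm
  rw [hd2, hxt, hyt]
  obtain ⟨a, hψa⟩ : ∃ a, ψ t = ψe t + a := ⟨ψ t - ψe t, by ring⟩
  simp only [hψa, add_sub_cancel_left, sin_add, cos_add]
  field_simp
  linear_combination (cos (ψe t) * (r t * d - cos a * pdy' + sin a * pdx')
    + (sin a ^ 2 + cos a ^ 2 + 1) * (u t * sin (ψe t) * cos (ψe t) + v t * cos (ψe t) ^ 2))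
      * sin_sq_add_cos_sq a

/-- Derivative of the orientation error
`e_o = (e_x/e_d)·sin ψ − (e_y/e_d)·cos ψ` (with `e_x = p_{x,des} − p_x`, etc.,
`e_d = ‖e‖`) under the USV kinematics `ṗ_x = u cos ψ − v sin ψ`,
`ṗ_y = u sin ψ + v cos ψ`, `ψ̇ = r`, where the differentiable angle `ψ_e` satisfies
`e_x = e_d·cos(ψ−ψ_e)` and `e_y = e_d·sin(ψ−ψ_e)`:
`ė_o = r cos ψ_e + (u/e_d) sin ψ_e cos ψ_e + (v/e_d) cos² ψ_e
  − (ṗ_{x,des}/e_d)(sin ψ_e cos(ψ−ψ_e) − sin ψ)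
  − (ṗ_{y,des}/e_d)(sin ψ_e sin(ψ−ψ_e) + cos ψ)`. -/
theorem stmt_9 (px py pdx pdy ψ ψe u v r : ℝ → ℝ) (pdx' pdy' t : ℝ)
    (hpx : HasDerivAt px (u t * Real.cos (ψ t) - v t * Real.sin (ψ t)) t)
    (hpy : HasDerivAt py (u t * Real.sin (ψ t) + v t * Real.cos (ψ t)) t)
    (hψ : HasDerivAt ψ (r t) t)
    (hpdx : HasDerivAt pdx pdx' t) (hpdy : HasDerivAt pdy pdy' t)
    (hψe : DifferentiableAt ℝ ψe t)
    (hne : ¬(pdx t - px t = 0 ∧ pdy t - py t = 0))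
    (hx : ∀ s : ℝ, pdx s - px s
      = Real.sqrt ((pdx s - px s) ^ 2 + (pdy s - py s) ^ 2) * Real.cos (ψ s - ψe s))
    (hy : ∀ s : ℝ, pdy s - py s
      = Real.sqrt ((pdx s - px s) ^ 2 + (pdy s - py s) ^ 2) * Real.sin (ψ s - ψe s)) :
    HasDerivAt (fun s =>
        ((pdx s - px s) / Real.sqrt ((pdx s - px s) ^ 2 + (pdy s - py s) ^ 2))
            * Real.sin (ψ s)
          - ((pdy s - py s) / Real.sqrt ((pdx s - px s) ^ 2 + (pdy s - py s) ^ 2))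
            * Real.cos (ψ s))
      (r t * Real.cos (ψe t)
        + (u t / Real.sqrt ((pdx t - px t) ^ 2 + (pdy t - py t) ^ 2))
            * Real.sin (ψe t) * Real.cos (ψe t)
        + (v t / Real.sqrt ((pdx t - px t) ^ 2 + (pdy t - py t) ^ 2))
            * Real.cos (ψe t) ^ 2
        - (pdx' / Real.sqrt ((pdx t - px t) ^ 2 + (pdy t - py t) ^ 2))
            * (Real.sin (ψe t) * Real.cos (ψ t - ψe t) - Real.sin (ψ t))
        - (pdy' / Real.sqrt ((pdx t - px t) ^ 2 + (pdy t - py t) ^ 2))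
            * (Real.sin (ψe t) * Real.sin (ψ t - ψe t) + Real.cos (ψ t))) t :=
  stmt_9_general px py pdx pdy ψ ψe u v r pdx' pdy' t hpx hpy hψ hpdx hpdy hne hx hy
end

section
/- Let k_u > 0, k_r > 0, Δ_x > 0, let ε_u < 0 and ε_r ∈ ℝ, and set k_α = k_r/(Δ_x·k_u). Define the rudder angle α = arctan(k_α·ε_r/ε_u) and the thrust F = −k_u·ε_u/cos α. Then F > 0, the generalized force satisfies X = F·cos α = −k_u·ε_u, and the generalized torque satisfies N = Δ_x·F·sin α = −k_r·ε_r. -/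
open Real

/-- In the unsaturated regime, the rudder angle `α = arctan(k_α·ε_r/ε_u)` with
`k_α = k_r/(Δ_x·k_u)` and thrust `F = −k_u·ε_u/cos α` realize the desired generalized
force `X = F·cos α = −k_u·ε_u` and torque `N = Δ_x·F·sin α = −k_r·ε_r`, with `F > 0`. -/
theorem stmt_10 (ku kr Δx εu εr : ℝ) (hku : 0 < ku) (hkr : 0 < kr) (hΔx : 0 < Δx)
    (hεu : εu < 0) :
    0 < -ku * εu / Real.cos (Real.arctan (kr / (Δx * ku) * εr / εu)) ∧
    (-ku * εu / Real.cos (Real.arctan (kr / (Δx * ku) * εr / εu)))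
        * Real.cos (Real.arctan (kr / (Δx * ku) * εr / εu)) = -ku * εu ∧
    Δx * (-ku * εu / Real.cos (Real.arctan (kr / (Δx * ku) * εr / εu)))
        * Real.sin (Real.arctan (kr / (Δx * ku) * εr / εu)) = -kr * εr := by
  set x := kr / (Δx * ku) * εr / εu with hx
  have hcos : 0 < Real.cos (Real.arctan x) := Real.cos_arctan_pos x
  have hne : Real.cos (Real.arctan x) ≠ 0 := ne_of_gt hcos
  have hnum : 0 < -ku * εu := by nlinarith
  refine ⟨div_pos hnum hcos, div_mul_cancel₀ _ hne, ?_⟩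
  have htan : Real.sin (Real.arctan x) = x * Real.cos (Real.arctan x) := by
    have := Real.tan_arctan x
    rw [Real.tan_eq_sin_div_cos] at this
    field_simp at this
    linarith [this]
  rw [htan]
  have : Δx * (-ku * εu / Real.cos (Real.arctan x)) * (x * Real.cos (Real.arctan x))
      = Δx * (-ku * εu) * x := by field_simp
  rw [this, hx]
  field_simp [hεu.ne, hΔx.ne', hku.ne']
end

section
/- Let q_0, q_1, q_2, q_3 ∈ ℝ² be control points and p_1, …, p_n ∈ ℝ² be polygon vertices, and suppose there exist h ∈ ℝ² and d ∈ ℝ with ⟨h, q_i⟩ > d for i = 0,…,3 and ⟨h, p_l⟩ < d for l = 1,…,n. Then for every u ∈ [0, 1], the spline point s(u) = (1/6)·((1−u)³·q_0 + (3u³ − 6u² + 4)·q_1 + (−3u³ + 3u² + 3u + 1)·q_2 + u³·q_3) does not belong to the convex hull of {p_1, …, p_n}; in particular the spline segment avoids the obstacle polygon. -/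
open RealInnerProductSpace

/-- If the four control points of a cubic uniform B-spline segment are strictly linearly
separated from the vertices of an obstacle polygon, then every point of the spline
segment avoids the convex hull of the polygon vertices. -/
theorem stmt_17 (n : ℕ) (q0 q1 q2 q3 : EuclideanSpace ℝ (Fin 2))
    (p : Fin n → EuclideanSpace ℝ (Fin 2))
    (h : EuclideanSpace ℝ (Fin 2)) (d : ℝ)
    (hq0 : d < ⟪h, q0⟫) (hq1 : d < ⟪h, q1⟫) (hq2 : d < ⟪h, q2⟫) (hq3 : d < ⟪h, q3⟫)
    (hp : ∀ l : Fin n, ⟪h, p l⟫ < d) :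
    ∀ u : ℝ, u ∈ Set.Icc (0 : ℝ) 1 →
      (1 / 6 : ℝ) • (((1 - u) ^ 3) • q0 + (3 * u ^ 3 - 6 * u ^ 2 + 4) • q1
          + (-3 * u ^ 3 + 3 * u ^ 2 + 3 * u + 1) • q2 + (u ^ 3) • q3)
        ∉ convexHull ℝ (Set.range p) := by
  intro u hu hmem
  obtain ⟨hu0, hu1⟩ := hu
  have hlin : IsLinearMap ℝ (fun x : EuclideanSpace ℝ (Fin 2) => ⟪h, x⟫) :=
    ⟨fun x y => inner_add_right h x y, fun c x => real_inner_smul_right h x c⟩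
  have hsub : convexHull ℝ (Set.range p) ⊆ {x | ⟪h, x⟫ < d} :=
    convexHull_min (by rintro x ⟨l, rfl⟩; exact hp l) (convex_halfSpace_lt hlin d)
  have hlt := hsub hmem
  simp only [Set.mem_setOf_eq, inner_add_right, real_inner_smul_right] at hlt
  have ha : 0 ≤ (1 - u) ^ 3 := pow_nonneg (by linarith) 3
  have hb : 0 < 3 * u ^ 3 - 6 * u ^ 2 + 4 := by nlinarith [sq_nonneg u, sq_nonneg (1 - u)]
  have hc : 0 ≤ -3 * u ^ 3 + 3 * u ^ 2 + 3 * u + 1 := by nlinarith [sq_nonneg u]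
  have he : 0 ≤ u ^ 3 := pow_nonneg hu0 3
  nlinarith [mul_nonneg ha (sub_pos.2 hq0).le, mul_pos hb (sub_pos.2 hq1),
    mul_nonneg hc (sub_pos.2 hq2).le, mul_nonneg he (sub_pos.2 hq3).le]
end
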